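/- Let M N : ℕ be positive, A : Matrix (Fin M) (Fin M) ℂ and B : Matrix (Fin N) (Fin N) ℂ. Then the spectrum of the Kronecker sum is the sumset of the spectra: spectrum ℂ (A ⊞ B) = {z : ℂ | ∃ α ∈ spectrum ℂ A, ∃ β ∈ spectrum ℂ B, z = α + β}. -/

import Mathlib

/-!
An eigenvector of `A ⊞ B` for `z`, reshaped into a nonzero matrix `Y`, solves the Sylvester
equation `B Y = Y (z - Aᵀ)`. A nonzero solution `X` of `A X = X C` forces `A` and `C` to share an
eigenvalue: `X χ_A(C) = χ_A(A) X = 0`, so `χ_A(C)` is singular, and by spectral mapping some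
eigenvalue of `C` is a root of `χ_A`. Conversely, if `A v = α v` and `B w = β w`, then `w vᵀ`
solves `B Y + Y Aᵀ = (α + β) Y`.
-/

/-- The Kronecker sum `A ⊞ B = A ⊗ I_N + I_M ⊗ B` of two square complex matrices. -/
def kronSum {M N : ℕ} (A : Matrix (Fin M) (Fin M) ℂ) (B : Matrix (Fin N) (Fin N) ℂ) :
    Matrix (Fin M × Fin N) (Fin M × Fin N) ℂ :=
  fun p q => (if p.2 = q.2 then A p.1 q.1 else 0) + (if p.1 = q.1 then B p.2 q.2 else 0)

open Polynomial Matrix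
open scoped Kronecker

namespace Matrix

variable {m n : Type*} [Fintype m] [DecidableEq m] [Fintype n] [DecidableEq n]

theorem mem_spectrum_iff_exists_mulVec_eq_smul {K : Type*} [Field K] (A : Matrix n n K) (μ : K) :
    μ ∈ spectrum K A ↔ ∃ v ≠ 0, A *ᵥ v = μ • v := by
  rw [← spectrum_toLin', ← Module.End.hasEigenvalue_iff_mem_spectrum,
    Module.End.hasEigenvalue_iff, Submodule.ne_bot_iff]
  simp only [Module.End.mem_eigenspace_iff, toLin'_apply, and_comm]

theorem spectrum_transpose {R : Type*} [CommRing R] (A : Matrix n n R) :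
    spectrum R Aᵀ = spectrum R A := by
  ext μ
  rw [spectrum.mem_iff, spectrum.mem_iff, ← isUnit_transpose, transpose_sub,
    algebraMap_eq_diagonal, diagonal_transpose, transpose_transpose]

theorem aeval_mul_eq_mul_aeval {R : Type*} [CommSemiring R] {A : Matrix m m R}
    {C : Matrix n n R} {X : Matrix m n R} (h : A * X = X * C) (p : R[X]) :
    aeval A p * X = X * aeval C p := by
  have hpow (k : ℕ) : A ^ k * X = X * C ^ k := by
    induction k with
    | zero => simp
    | succ k ih => rw [pow_succ, Matrix.mul_assoc, h, ← Matrix.mul_assoc, ih, Matrix.mul_assoc,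
        ← pow_succ]
  induction p using Polynomial.induction_on' with
  | add p q hp hq => rw [map_add, map_add, Matrix.add_mul, Matrix.mul_add, hp, hq]
  | monomial k c => rw [aeval_monomial, aeval_monomial, ← Algebra.smul_def, ← Algebra.smul_def,
      Matrix.smul_mul, Matrix.mul_smul, hpow]

theorem spectrum_inter_nonempty_of_mul_eq_mul {K : Type*} [Field K] [IsAlgClosed K]
    {A : Matrix m m K} {C : Matrix n n K} {X : Matrix m n K} (hX : X ≠ 0) (h : A * X = X * C) :
    (spectrum K A ∩ spectrum K C).Nonempty := by
  have hm : Nonempty m := by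
    by_contra hm
    exact hX (ext fun i => (not_nonempty_iff.mp hm).elim i)
  have hdeg : 0 < A.charpoly.degree := by
    rw [← natDegree_pos_iff_degree_pos, charpoly_natDegree_eq_dim]
    exact Fintype.card_pos
  have hzero : X * aeval C A.charpoly = 0 := by
    rw [← aeval_mul_eq_mul_aeval h, aeval_self_charpoly, Matrix.zero_mul]
  have hsing : (0 : K) ∈ spectrum K (aeval C A.charpoly) := by
    refine spectrum.zero_mem (R := K) fun hunit => hX ?_
    calc X = X * (aeval C A.charpoly * ↑hunit.unit⁻¹) := by
          rw [hunit.mul_val_inv, Matrix.mul_one]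
      _ = 0 := by rw [← Matrix.mul_assoc, hzero, Matrix.zero_mul]
  rw [spectrum.map_polynomial_aeval_of_degree_pos C _ hdeg] at hsing
  obtain ⟨μ, hμC, hμA⟩ := hsing
  exact ⟨μ, mem_spectrum_iff_isRoot_charpoly.mpr hμA, hμC⟩

end Matrix

section kronSum

variable {M N : ℕ} (A : Matrix (Fin M) (Fin M) ℂ) (B : Matrix (Fin N) (Fin N) ℂ)

theorem kronSum_eq_kronecker : kronSum A B = A ⊗ₖ 1 + 1 ⊗ₖ B := by
  ext ⟨l, i⟩ ⟨k, j⟩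
  simp [kronSum, one_apply]

-- `vec` stacks columns: an `N × M` matrix becomes a vector on `Fin M × Fin N`.
theorem kronSum_mulVec_vec (Y : Matrix (Fin N) (Fin M) ℂ) :
    kronSum A B *ᵥ vec Y = vec (B * Y + Y * Aᵀ) := by
  rw [kronSum_eq_kronecker, add_mulVec, kronecker_mulVec_vec, kronecker_mulVec_vec, vec_add,
    Matrix.one_mul, transpose_one, Matrix.mul_one, add_comm]

theorem mem_spectrum_kronSum_iff (z : ℂ) :
    z ∈ spectrum ℂ (kronSum A B) ↔
      ∃ Y : Matrix (Fin N) (Fin M) ℂ, Y ≠ 0 ∧ B * Y + Y * Aᵀ = z • Y := by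
  rw [mem_spectrum_iff_exists_mulVec_eq_smul, vec_bijective.surjective.exists]
  simp only [ne_eq, vec_eq_zero_iff, kronSum_mulVec_vec, ← vec_smul, vec_inj]

variable {A B}

theorem add_mem_spectrum_kronSum {α β : ℂ} (hα : α ∈ spectrum ℂ A)
    (hβ : β ∈ spectrum ℂ B) :
    α + β ∈ spectrum ℂ (kronSum A B) := by
  obtain ⟨v, hv, hAv⟩ := (mem_spectrum_iff_exists_mulVec_eq_smul A α).mp hα
  obtain ⟨w, hw, hBw⟩ := (mem_spectrum_iff_exists_mulVec_eq_smul B β).mp hβ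
  refine (mem_spectrum_kronSum_iff A B _).mpr ⟨vecMulVec w v, ?_, ?_⟩
  · obtain ⟨i, hi⟩ := Function.ne_iff.mp hw
    obtain ⟨l, hl⟩ := Function.ne_iff.mp hv
    exact fun h => mul_ne_zero hi hl congr($h i l)
  · rw [mul_vecMulVec, vecMulVec_mul, vecMul_transpose, hAv, hBw, smul_vecMulVec, vecMulVec_smul,
      add_comm, add_smul]

theorem exists_add_eq_of_mem_spectrum_kronSum {z : ℂ} (hz : z ∈ spectrum ℂ (kronSum A B)) :
    ∃ α ∈ spectrum ℂ A, ∃ β ∈ spectrum ℂ B, z = α + β := by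
  obtain ⟨Y, hY, hYeq⟩ := (mem_spectrum_kronSum_iff A B z).mp hz
  have hsylvester : B * Y = Y * (algebraMap ℂ _ z - Aᵀ) := by
    rw [Matrix.mul_sub, Algebra.algebraMap_eq_smul_one, Matrix.mul_smul, Matrix.mul_one, ← hYeq,
      add_sub_cancel_right]
  obtain ⟨β, hβB, hβ⟩ := spectrum_inter_nonempty_of_mul_eq_mul hY hsylvester
  rw [← spectrum.singleton_sub_eq, Set.singleton_sub, spectrum_transpose] at hβ
  obtain ⟨α, hα, rfl⟩ := hβ
  exact ⟨α, hα, z - α, hβB, by ring⟩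

end kronSum

theorem spectrum_kronSum_general
    (M N : ℕ)
    (A : Matrix (Fin M) (Fin M) ℂ) (B : Matrix (Fin N) (Fin N) ℂ) :
    spectrum ℂ (kronSum A B) =
      {z : ℂ | ∃ α ∈ spectrum ℂ A, ∃ β ∈ spectrum ℂ B, z = α + β} := by
  ext z
  refine ⟨exists_add_eq_of_mem_spectrum_kronSum, ?_⟩
  rintro ⟨α, hα, β, hβ, rfl⟩
  exact add_mem_spectrum_kronSum hα hβ

theorem spectrum_kronSum
    (M N : ℕ) (hM : 0 < M) (hN : 0 < N)
    (A : Matrix (Fin M) (Fin M) ℂ) (B : Matrix (Fin N) (Fin N) ℂ) :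
    spectrum ℂ (kronSum A B) =
      {z : ℂ | ∃ α ∈ spectrum ℂ A, ∃ β ∈ spectrum ℂ B, z = α + β} :=
  spectrum_kronSum_general M N A B
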